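/- Let G be a connected weak framework for a matroid M and let H be a non-empty subgraph of G. Then |V(H)| − r_M(E(H)) ≥ |V(G)| − r(M). -/

import Mathlib

open Set Matroid
open scoped Classical

namespace QuasiGraphicPaper

universe u v

/-- A finite multigraph: a set `V` of vertices (in an ambient type `α`), a set `E` of
edges (in an ambient type `β`), and an incidence function assigning to each edge an
unordered pair of endpoints; loop-edges and parallel edges are allowed. -/
structure Graph (α : Type u) (β : Type v) where
  V : Set α
  E : Set β
  ends : β → Sym2 α
  finV : V.Finite
  finE : E.Finite
  ends_mem : ∀ ⦃e⦄, e ∈ E → ∀ ⦃x⦄, x ∈ ends e → x ∈ V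

namespace Graph

variable {α : Type u} {β : Type v}

/-- `e` is a loop-edge of `G` at the vertex `v`. -/
def IsLoopAt (G : Graph α β) (e : β) (v : α) : Prop :=
  e ∈ G.E ∧ G.ends e = Sym2.diag v

/-- `loops_G(v)`: the set of loop-edges of `G` at `v`. -/
def loopsAt (G : Graph α β) (v : α) : Set β := {e | G.IsLoopAt e v}

/-- Two vertices are adjacent if some edge of `G` has them as its two endpoints. -/
def Adj (G : Graph α β) (u v : α) : Prop := ∃ e ∈ G.E, G.ends e = s(u, v)

/-- A graph is connected if any two of its vertices are joined by a walk.
(The graph with no vertices is connected.) -/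
def Connected (G : Graph α β) : Prop :=
  ∀ u ∈ G.V, ∀ v ∈ G.V, Relation.ReflTransGen G.Adj u v

/-- Delete a set `X` of vertices: remove the vertices in `X` and all edges meeting `X`. -/
def deleteVertices (G : Graph α β) (X : Set α) : Graph α β where
  V := G.V \ X
  E := {e ∈ G.E | ∀ x ∈ G.ends e, x ∉ X}
  ends := G.ends
  finV := G.finV.diff
  finE := G.finE.subset (sep_subset _ _)
  ends_mem := fun e he x hx => ⟨G.ends_mem he.1 hx, he.2 x hx⟩

/-- `G − v`: delete the single vertex `v`. -/
abbrev deleteVertex (G : Graph α β) (v : α) : Graph α β := G.deleteVertices {v}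

/-- `G − e`: delete the edge `e` (keeping all vertices). -/
def deleteEdge (G : Graph α β) (e : β) : Graph α β where
  V := G.V
  E := G.E \ {e}
  ends := G.ends
  finV := G.finV
  finE := G.finE.diff
  ends_mem := fun f hf x hx => G.ends_mem hf.1 hx

/-- `G[X]`: the subgraph of `G` with edge set `X` (intersected with `E(G)`) and
no isolated vertices. -/
def restrictEdges (G : Graph α β) (X : Set β) : Graph α β where
  V := {v | ∃ e ∈ X ∩ G.E, v ∈ G.ends e}
  E := X ∩ G.E
  ends := G.ends
  finV := G.finV.subset (by rintro v ⟨e, ⟨-, he⟩, hv⟩; exact G.ends_mem he hv)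
  finE := G.finE.subset inter_subset_right
  ends_mem := fun e he x hx => ⟨e, he, hx⟩

/-- The connected component of `G` containing the vertex `v`, as a graph. -/
def componentOf (G : Graph α β) (v : α) : Graph α β where
  V := {u ∈ G.V | Relation.ReflTransGen G.Adj v u}
  E := {e ∈ G.E | ∀ x ∈ G.ends e, Relation.ReflTransGen G.Adj v x}
  ends := G.ends
  finV := G.finV.subset (sep_subset _ _)
  finE := G.finE.subset (sep_subset _ _)
  ends_mem := fun e he x hx => ⟨G.ends_mem he.1 hx, he.2 x hx⟩

/-- `H` is a connected component of `G`. -/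
def IsComponentOf (H G : Graph α β) : Prop := ∃ v ∈ G.V, H = G.componentOf v

/-- The number of connected components of `G`. -/
noncomputable def ncomponents (G : Graph α β) : ℕ :=
  {H : Graph α β | H.IsComponentOf G}.ncard

/-- `G` has at most two connected components: among any three vertices, two are joined. -/
def AtMostTwoComponents (G : Graph α β) : Prop :=
  ∀ u ∈ G.V, ∀ v ∈ G.V, ∀ w ∈ G.V,
    Relation.ReflTransGen G.Adj u v ∨ Relation.ReflTransGen G.Adj u w ∨
      Relation.ReflTransGen G.Adj v w

/-- The degree of a vertex: loop-edges count twice. -/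
noncomputable def degree (G : Graph α β) (v : α) : ℕ :=
  ({e ∈ G.E | v ∈ G.ends e ∧ ¬ (G.ends e).IsDiag}).ncard +
    2 * ({e ∈ G.E | G.ends e = Sym2.diag v}).ncard

/-- `G` is a cycle: it is connected, has at least one edge, and every vertex has
degree two. -/
def IsCycleGraph (G : Graph α β) : Prop :=
  G.E.Nonempty ∧ G.Connected ∧ ∀ v ∈ G.V, G.degree v = 2

/-- `C` is (the edge set of) a cycle of `G`. -/
def CycleSet (G : Graph α β) (C : Set β) : Prop :=
  C ⊆ G.E ∧ (G.restrictEdges C).IsCycleGraph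

/-- A forest: a graph with no cycles (in particular no loop-edges). -/
def IsForest (G : Graph α β) : Prop := ∀ C, ¬ G.CycleSet C

/-- `H` is a subgraph of `G`. -/
def IsSubgraph (H G : Graph α β) : Prop := H.V ⊆ G.V ∧ H.E ⊆ G.E ∧ H.ends = G.ends

/-- `G` is `k`-connected if `G − X` is connected for every vertex set `X` with `|X| < k`. -/
def KConnected (G : Graph α β) (k : ℕ) : Prop :=
  ∀ X : Set α, X.encard < k → (G.deleteVertices X).Connected

/-- A theta: a `2`-connected graph with exactly two vertices of degree three, all
other vertices having degree two. -/
def IsTheta (H : Graph α β) : Prop :=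
  H.KConnected 2 ∧
    ∃ a ∈ H.V, ∃ b ∈ H.V, a ≠ b ∧ H.degree a = 3 ∧ H.degree b = 3 ∧
      ∀ v ∈ H.V, v ≠ a → v ≠ b → H.degree v = 2

/-- `G / e`: contract the non-loop edge `e` with endpoints `x` and `y`
(identifying `y` with `x` and deleting `e`). -/
noncomputable def contractEdge (G : Graph α β) (e : β) (x y : α) (he : e ∈ G.E)
    (hxy : G.ends e = s(x, y)) (hne : x ≠ y) : Graph α β where
  V := G.V \ {y}
  E := G.E \ {e}
  ends := fun f => (G.ends f).map (fun w => if w = y then x else w)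
  finV := G.finV.diff
  finE := G.finE.diff
  ends_mem := by
    rintro f ⟨hf, -⟩ z hz
    try dsimp only at hz
    rw [Sym2.mem_map] at hz
    obtain ⟨w, hw, rfl⟩ := hz
    by_cases hwy : w = y
    · rw [if_pos hwy]
      have hx : x ∈ G.ends e := by rw [hxy]; exact Sym2.mem_mk_left x y
      exact ⟨G.ends_mem he hx, by simp [hne]⟩
    · rw [if_neg hwy]
      exact ⟨G.ends_mem hf hw, by simp [hwy]⟩

/-- `G ∘ e`: for a loop-edge `e` at a vertex `v` which is the unique loop-edge at `v`,
delete `v` and `e`, and replace every other edge `f = vw` at `v` by a loop-edge at `w`. -/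
noncomputable def circ (G : Graph α β) (e : β) (v : α)
    (hno : ∀ f ∈ G.E, G.ends f = Sym2.diag v → f = e) : Graph α β where
  V := G.V \ {v}
  E := G.E \ {e}
  ends := fun f =>
    if h : f ∈ G.E ∧ f ≠ e ∧ v ∈ G.ends f then Sym2.diag (Sym2.Mem.other h.2.2)
    else G.ends f
  finV := G.finV.diff
  finE := G.finE.diff
  ends_mem := by
    rintro f ⟨hf, hfe⟩ z hz
    try dsimp only at hz
    have hfe' : f ≠ e := fun h' => hfe (by simp [h'])
    by_cases h : f ∈ G.E ∧ f ≠ e ∧ v ∈ G.ends f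
    · rw [dif_pos h] at hz
      have hze : z = Sym2.Mem.other h.2.2 := by
        have h2 : z ∈ s(Sym2.Mem.other h.2.2, Sym2.Mem.other h.2.2) := hz
        rw [Sym2.mem_iff] at h2
        tauto
      subst hze
      refine ⟨G.ends_mem hf (Sym2.other_mem h.2.2), ?_⟩
      simp only [mem_singleton_iff]
      intro hzv
      apply h.2.1
      apply hno f hf
      show G.ends f = s(v, v)
      rw [← Sym2.other_spec h.2.2, hzv]
    · rw [dif_neg h] at hz
      refine ⟨G.ends_mem hf hz, ?_⟩
      simp only [mem_singleton_iff]
      intro hzv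
      subst hzv
      exact h ⟨hf, hfe', hz⟩

end Graph

/-! ### Matroid notions -/

variable {α : Type u} {β : Type v}

/-- The rank `r_M(X)` of a set `X` in a matroid `M`: the maximum size of an
independent subset of `X`. -/
noncomputable def rank (M : Matroid β) (X : Set β) : ℕ :=
  (⨆ I ∈ {I : Set β | M.Indep I ∧ I ⊆ X}, I.encard).toNat

/-- `C` is a circuit of `M` : a minimal dependent set. -/
def IsCircuit (M : Matroid β) (C : Set β) : Prop :=
  M.Dep C ∧ ∀ D, D ⊂ C → M.Indep D

/-- `M \ D` : delete the set `D` from the matroid `M`. -/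
def deleteM (M : Matroid β) (D : Set β) : Matroid β := M ↾ (M.E \ D)

/-- `M / C` : contract the set `C` in the matroid `M`. -/
def contractM (M : Matroid β) (C : Set β) : Matroid β := (M✶ ↾ (M✶.E \ C))✶

/-- `G` is a weak framework for `M`: conditions (1)–(3). -/
def WeakFramework (G : Graph α β) (M : Matroid β) : Prop :=
  G.E = M.E ∧
  (∀ H : Graph α β, H.IsComponentOf G → rank M H.E ≤ H.V.ncard) ∧
  (∀ v ∈ G.V,
    M.closure (G.deleteVertex v).E ⊆ (G.deleteVertex v).E ∪ G.loopsAt v)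

/-- `G` is a framework for `M`: conditions (1)–(4). -/
def Framework (G : Graph α β) (M : Matroid β) : Prop :=
  WeakFramework G M ∧
    ∀ C, IsCircuit M C → (G.restrictEdges C).AtMostTwoComponents

/-- `M` is the cycle matroid `M(G)` of `G` : the ground set of `M` is `E(G)`, and the
circuits of `M` are exactly the edge sets of cycles of `G`. -/
def IsCycleMatroidOf (G : Graph α β) (M : Matroid β) : Prop :=
  M.E = G.E ∧ ∀ C, IsCircuit M C ↔ G.CycleSet C

/-- A matroid is graphic if it is the cycle matroid of some graph. -/
def Graphic (M : Matroid β) : Prop :=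
  ∃ (γ : Type v) (G : Graph γ β), IsCycleMatroidOf G M

/-- A matroid is quasi-graphic if it has a framework. -/
def QuasiGraphic (M : Matroid β) : Prop :=
  ∃ (γ : Type v) (G : Graph γ β), Framework G M

/-- `M` is a lift of `N` if some single-element extension `M'` of `M` satisfies
`M' \ e = M` and `M' / e = N`. -/
def IsLiftOf (M N : Matroid β) : Prop :=
  ∃ M' : Matroid (Option β), (none : Option β) ∈ M'.E ∧
    deleteM M' {none} = M.map some (Option.some_injective β).injOn ∧
    contractM M' {none} = N.map some (Option.some_injective β).injOn

/-- `M` is a lifted-graphic matroid: for some single-element extension `M'` of `M`,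
`M' / e` is graphic. -/
def LiftedGraphic (M : Matroid β) : Prop :=
  ∃ M' : Matroid (Option β), (none : Option β) ∈ M'.E ∧
    deleteM M' {none} = M.map some (Option.some_injective β).injOn ∧
    Graphic (contractM M' {none})

/-- `(M, V)` is a framed matroid: `V` is a basis of `M` and every element of `M` is
spanned by a subset of `V` with at most two elements. -/
def FramedMatroid {γ : Type u} (M : Matroid γ) (V : Set γ) : Prop :=
  M.IsBase V ∧ ∀ e ∈ M.E, ∃ S ⊆ V, S.ncard ≤ 2 ∧ e ∈ M.closure S

/-- `M` is a frame matroid: `M = M' \ V` for some framed matroid `(M', V)`. -/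
def FrameMatroid (M : Matroid β) : Prop :=
  ∃ (γ : Type v) (M' : Matroid (β ⊕ γ)) (V : Set (β ⊕ γ)),
    FramedMatroid M' V ∧
      deleteM M' V = M.map Sum.inl Sum.inl_injective.injOn

/-- `M` is `3`-connected: it has no `k`-separation for `k ≤ 2`. -/
def ThreeConnected (M : Matroid β) : Prop :=
  ∀ X ⊆ M.E, ∀ k : ℕ, k ≤ 2 → (k : ℕ∞) ≤ X.encard → (k : ℕ∞) ≤ (M.E \ X).encard →
    rank M M.E + k ≤ rank M X + rank M (M.E \ X)

/-- `M` is representable over some field. -/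
def Representable (M : Matroid β) : Prop :=
  ∃ (F : Type v) (_ : Field F) (W : Type v) (_ : AddCommGroup W) (_ : Module F W)
    (φ : β → W), ∀ I ⊆ M.E, (M.Indep I ↔ LinearIndependent F (fun x : I => φ x))

/-- A collection `B` of cycles of `G` satisfies the theta-property if there is no
theta-subgraph of `G` with exactly two of its three cycles in `B`. -/
def ThetaProperty (G : Graph α β) (B : Set (Set β)) : Prop :=
  ∀ H : Graph α β, H.IsSubgraph G → H.IsTheta →
    ∀ C1 C2 C3, H.CycleSet C1 → H.CycleSet C2 → H.CycleSet C3 →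
      C1 ≠ C2 → C2 ≠ C3 → C1 ≠ C3 → C1 ∈ B → C2 ∈ B → C3 ∈ B

/-! Grow a vertex set `S` from `V(H)` to `V(G)`, one vertex at a time along an edge `e = xy` with
`x ∈ S`, `y ∉ S` (it exists since `G` is connected). Each step raises the rank of the set of edges
with both ends in `S` by one: those edges avoid `y`, so by condition (3) their closure lies in
`E(G − y) ∪ loops_G(y)`, which does not contain the non-loop edge `e`. As `E(H)` lies inside
`V(H)`, this gives `r_M(E(H)) + |V(G) − V(H)| ≤ r(M)`. -/

theorem _root_.Relation.ReflTransGen.exists_mem_notMem_rel {γ : Type*} {r : γ → γ → Prop}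
    {S : Set γ} {a b : γ} (h : Relation.ReflTransGen r a b) (ha : a ∈ S) (hb : b ∉ S) :
    ∃ x ∈ S, ∃ y ∉ S, r x y := by
  induction h with
  | refl => exact absurd ha hb
  | @tail c d _ hcd ih =>
    by_cases hc : c ∈ S
    · exact ⟨c, hc, d, hb, hcd⟩
    · exact ih hc

namespace Graph

variable {G H : Graph α β}

def edgesWithin (G : Graph α β) (S : Set α) : Set β := {e ∈ G.E | ∀ x ∈ G.ends e, x ∈ S}

lemma Connected.exists_adj_of_mem_of_notMem (hG : G.Connected) {S : Set α} {u w : α}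
    (hu : u ∈ G.V) (huS : u ∈ S) (hw : w ∈ G.V) (hwS : w ∉ S) : ∃ x ∈ S, ∃ y ∉ S, G.Adj x y :=
  (hG u hu w hw).exists_mem_notMem_rel huS hwS

lemma IsSubgraph.E_subset_edgesWithin (h : H.IsSubgraph G) : H.E ⊆ G.edgesWithin H.V :=
  fun _ he => ⟨h.2.1 he, fun _ hx => H.ends_mem he (h.2.2 ▸ hx)⟩

lemma edgesWithin_subset_deleteVertex_E {S : Set α} {y : α} (hy : y ∉ S) :
    G.edgesWithin S ⊆ (G.deleteVertex y).E :=
  fun _ he => ⟨he.1, fun x hx hxy => hy (mem_singleton_iff.1 hxy ▸ he.2 x hx)⟩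

end Graph

lemma rank_eq_toNat_eRk (M : Matroid β) (X : Set β) : rank M X = (M.eRk X).toNat := by
  obtain ⟨I, hI⟩ := M.exists_isBasis' X
  rw [rank, ← hI.encard_eq_eRk]
  congr 1
  exact le_antisymm (iSup₂_le fun J hJ => hI.encard_eq_eRk ▸ hJ.1.encard_le_eRk_of_subset hJ.2)
    (le_iSup₂_of_le I ⟨hI.indep, hI.subset⟩ le_rfl)

lemma cast_rank {M : Matroid β} {X : Set β} (hX : M.IsRkFinite X) :
    (rank M X : ℕ∞) = M.eRk X := by
  rw [rank_eq_toNat_eRk, ENat.natCast_toNat (eRk_ne_top_iff.2 hX)]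

namespace WeakFramework

variable {G : Graph α β} {M : Matroid β}

lemma notMem_closure (hwf : WeakFramework G M) {X : Set β} {e : β} {x y : α} (he : e ∈ G.E)
    (hexy : G.ends e = s(x, y)) (hxy : x ≠ y) (hX : X ⊆ (G.deleteVertex y).E) :
    e ∉ M.closure X := by
  intro hcl
  have hye : y ∈ G.ends e := hexy ▸ Sym2.mem_mk_right x y
  rcases hwf.2.2 y (G.ends_mem he hye) (M.closure_subset_closure hX hcl) with hdel | hloop
  · exact hdel.2 y hye rfl
  · have hdiag : s(x, y) = s(y, y) := hexy ▸ hloop.2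
    exact hxy (by simpa using hdiag)

lemma eRk_edgesWithin_add_one_le (hwf : WeakFramework G M) {S : Set α} {e : β} {x y : α}
    (he : e ∈ G.E) (hexy : G.ends e = s(x, y)) (hx : x ∈ S) (hy : y ∉ S) :
    M.eRk (G.edgesWithin S) + 1 ≤ M.eRk (G.edgesWithin (insert y S)) := by
  have hecl := hwf.notMem_closure he hexy (fun h => hy (h ▸ hx))
    (G.edgesWithin_subset_deleteVertex_E hy)
  rw [← M.eRk_insert_eq_add_one ⟨hwf.1 ▸ he, hecl⟩]
  refine M.eRk_mono (insert_subset ⟨he, ?_⟩ fun f hf => ⟨hf.1, fun z hz => Or.inr (hf.2 z hz)⟩)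
  rw [hexy]
  rintro z hz
  rcases Sym2.mem_iff.1 hz with rfl | rfl
  · exact Or.inr hx
  · exact Or.inl rfl

lemma eRk_edgesWithin_add_encard_le (hwf : WeakFramework G M) (hconn : G.Connected)
    {S : Set α} {u : α} (hu : u ∈ G.V) (huS : u ∈ S) :
    M.eRk (G.edgesWithin S) + (G.V \ S).encard ≤ M.eRank := by
  suffices ∀ n, ∀ S, u ∈ S → (G.V \ S).ncard = n →
      M.eRk (G.edgesWithin S) + (G.V \ S).encard ≤ M.eRank from this _ S huS rfl
  intro n
  induction n with
  | zero =>
    intro S _ h0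
    rw [(ncard_eq_zero G.finV.sdiff).1 h0, encard_empty, add_zero]
    exact M.eRk_le_eRank _
  | succ n ih =>
    intro S huS hn
    obtain ⟨w, hwV, hwS⟩ : (G.V \ S).Nonempty := nonempty_of_ncard_ne_zero (by omega)
    obtain ⟨x, hx, y, hy, e, he, hexy⟩ := hconn.exists_adj_of_mem_of_notMem hu huS hwV hwS
    have hyS : y ∈ G.V \ S := ⟨G.ends_mem he (hexy ▸ Sym2.mem_mk_right x y), hy⟩
    have hdiff : G.V \ insert y S = (G.V \ S) \ {y} := by
      rw [sdiff_sdiff, union_singleton]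
    calc M.eRk (G.edgesWithin S) + (G.V \ S).encard
        = M.eRk (G.edgesWithin S) + 1 + (G.V \ insert y S).encard := by
          rw [hdiff, ← encard_sdiff_singleton_add_one hyS, add_comm _ 1, add_assoc]
      _ ≤ M.eRk (G.edgesWithin (insert y S)) + (G.V \ insert y S).encard := by
          gcongr
          exact hwf.eRk_edgesWithin_add_one_le he hexy hx hy
      _ ≤ M.eRank := by
          refine ih _ (mem_insert_of_mem _ huS) ?_
          rw [hdiff, ncard_sdiff_singleton_of_mem hyS]
          omega

end WeakFramework

/-- Let `G` be a connected weak framework for a matroid `M` and let `H`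
be a non-empty subgraph of `G`. Then `|V(H)| − r_M(E(H)) ≥ |V(G)| − r(M)`. -/
theorem statement6 {α : Type u} {β : Type v} (G H : Graph α β) (M : Matroid β)
    (hwf : WeakFramework G M) (hconn : G.Connected)
    (hH : H.IsSubgraph G) (hne : H.V.Nonempty) :
    (G.V.ncard : ℤ) - (rank M M.E : ℤ) ≤ (H.V.ncard : ℤ) - (rank M H.E : ℤ) := by
  obtain ⟨u, hu⟩ := hne
  have hfin : ∀ X ⊆ G.E, M.IsRkFinite X := fun X hX => M.isRkFinite_of_finite (G.finE.subset hX)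
  have key : rank M H.E + (G.V.ncard - H.V.ncard) ≤ rank M M.E := by
    rw [← ENat.natCast_le_natCast, Nat.cast_add, cast_rank (hfin _ hH.2.1),
      cast_rank (hfin _ hwf.1.ge), eRk_ground, ← ncard_sdiff' hH.1 G.finV,
      G.finV.sdiff.cast_ncard_eq]
    calc M.eRk H.E + (G.V \ H.V).encard
        ≤ M.eRk (G.edgesWithin H.V) + (G.V \ H.V).encard := by
          gcongr
          exact M.eRk_mono hH.E_subset_edgesWithin
      _ ≤ M.eRank := hwf.eRk_edgesWithin_add_encard_le hconn (hH.1 hu) hu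
  have hle : H.V.ncard ≤ G.V.ncard := ncard_le_ncard hH.1 G.finV
  omega

end QuasiGraphicPaper
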